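/- arXiv:1803.02672 — 2 statements merged into one kernel-verified Lean document; each statement's English description precedes it below -/
import Mathlib

section
/- Let d ∈ ℕ*, α ∈ (0,1), k ∈ (0,α), and m(x) := ⟨x⟩^k. Then there exists a constant C > 0 (depending only on d, α, k) such that for all x ∈ ℝ^d, ∫_{ℝ^d} |m(y)^{−1} − m(x)^{−1}| / |y−x|^{d+α} dy ≤ C ⟨x⟩^{−α}. -/
/-!
Put `r = ⟨x⟩ / 2`. For `|y - x| < r` we have `⟨y⟩ ≥ r`, since `⟨·⟩` is 1-Lipschitz, so
the mean value theorem for `t ↦ t ^ (-k)` gives `|⟨y⟩^{-k} - ⟨x⟩^{-k}| ≤ k r^{-k-1} |y - x|`;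
for `|y - x| ≥ r` the difference is at most `1`. Integrating against `|y - x|^{-d-α}` and
rescaling by `r` bounds the integral by `k r^{-k-α} c₁ + r^{-α} c₂`, where
`c₁ = ∫_{|w|<1} |w|^{1-d-α}` is finite because `α < 1` and `c₂ = ∫_{|w|≥1} |w|^{-d-α}` is
finite because `α > 0`. Since `⟨x⟩ ≥ 1` and `k ≥ 0`, both terms are `O(⟨x⟩^{-α})`.
-/

open MeasureTheory

/-- Japanese bracket `⟨x⟩ = (1+|x|²)^{1/2}`. -/
noncomputable def jb {d : ℕ} (x : EuclideanSpace ℝ (Fin d)) : ℝ := Real.sqrt (1 + ‖x‖ ^ 2)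

open Metric Module
open scoped ENNReal NNReal

theorem abs_rpow_neg_sub_rpow_neg_le {k c u v : ℝ} (hk : 0 ≤ k) (hc : 0 < c) (hu : c ≤ u)
    (hv : c ≤ v) : |u ^ (-k) - v ^ (-k)| ≤ k * c ^ (-k - 1) * |u - v| := by
  refine Convex.norm_image_sub_le_of_norm_hasDerivWithin_le (f := fun t : ℝ => t ^ (-k))
    (fun t ht => (Real.hasDerivAt_rpow_const (Or.inl (hc.trans_le ht).ne')).hasDerivWithinAt)
    (fun t hct => ?_) (convex_Ici c) hv hu
  have ht : 0 < t := hc.trans_le hct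
  rw [norm_mul, norm_neg, Real.norm_of_nonneg hk, Real.norm_of_nonneg (by positivity)]
  exact mul_le_mul_of_nonneg_left (Real.rpow_le_rpow_of_nonpos hc hct (by linarith)) hk

theorem div_two_rpow_neg {m : ℝ} (hm : 0 ≤ m) (s : ℝ) : (m / 2) ^ (-s) = 2 ^ s * m ^ (-s) := by
  rw [Real.div_rpow hm zero_le_two, Real.rpow_neg zero_le_two, div_inv_eq_mul, mul_comm]

theorem preimage_smul_ball_zero {E : Type*} [NormedAddCommGroup E] [NormedSpace ℝ E] {r : ℝ}
    (hr : 0 < r) : (r • ·) ⁻¹' ball (0 : E) r = ball 0 1 := by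
  ext w
  simp [norm_smul, abs_of_pos hr, hr]

section HaarScaling

variable {E : Type*} [NormedAddCommGroup E] [NormedSpace ℝ E] [FiniteDimensional ℝ E]
  [MeasurableSpace E] [BorelSpace E] (μ : Measure E) [μ.IsAddHaarMeasure]

theorem setLIntegral_norm_rpow_eq_mul_preimage_smul {r : ℝ} (hr : 0 < r) (a : ℝ) (s : Set E) :
    ∫⁻ z in s, ENNReal.ofReal (‖z‖ ^ a) ∂μ =
      ENNReal.ofReal (r ^ ((finrank ℝ E : ℝ) + a)) *
        ∫⁻ w in (r • ·) ⁻¹' s, ENNReal.ofReal (‖w‖ ^ a) ∂μ := by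
  have hmp : MeasurePreserving (r • ·) μ (ENNReal.ofReal (r ^ finrank ℝ E)⁻¹ • μ) :=
    ⟨measurable_const_smul r, by
      rw [Measure.map_addHaar_smul μ hr.ne', abs_of_pos (by positivity)]⟩
  have key := hmp.setLIntegral_comp_preimage_emb (measurableEmbedding_const_smul₀ hr.ne')
    (fun z => ENNReal.ofReal (‖z‖ ^ a)) s
  simp only [norm_smul, Real.norm_eq_abs, abs_of_pos hr,
    Real.mul_rpow hr.le (norm_nonneg _), ENNReal.ofReal_mul (Real.rpow_nonneg hr.le a)] at key
  rw [lintegral_const_mul' _ _ ENNReal.ofReal_ne_top, setLIntegral_smul_measure,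
    smul_eq_mul] at key
  rw [← one_mul (∫⁻ z in s, _ ∂μ), ← ENNReal.ofReal_one,
    ← mul_inv_cancel₀ (pow_pos hr (finrank ℝ E)).ne', ENNReal.ofReal_mul (by positivity),
    mul_assoc, ← key, ← mul_assoc, ← ENNReal.ofReal_mul (by positivity), ← Real.rpow_natCast,
    ← Real.rpow_add hr]

theorem lintegral_ball_norm_rpow_lt_top (hn : 1 ≤ finrank ℝ E) {a : ℝ}
    (ha : -(finrank ℝ E : ℝ) < a) (r : ℝ) :
    ∫⁻ w in ball 0 r, ENNReal.ofReal (‖w‖ ^ a) ∂μ < ⊤ := by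
  refine (integrableOn_ball_of_norm_le_rpow (C := 1) (α := -a) hn (by linarith)
    (ae_of_all _ fun w => ?_) (measurable_norm.pow_const a).aestronglyMeasurable
    ).setLIntegral_lt_top
  rw [neg_neg, one_mul, Real.norm_eq_abs, abs_of_nonneg (by positivity)]

theorem lintegral_compl_ball_norm_rpow_lt_top {b : ℝ} (hb : (finrank ℝ E : ℝ) < b) :
    ∫⁻ w in (ball 0 1)ᶜ, ENNReal.ofReal (‖w‖ ^ (-b)) ∂μ < ⊤ := by
  have hb0 : 0 ≤ b := (Nat.cast_nonneg _).trans hb.le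
  refine IntegrableOn.setLIntegral_lt_top (f := fun w => ‖w‖ ^ (-b)) <|
    Integrable.mono' ((integrable_one_add_norm hb).const_mul (2 ^ b)).integrableOn
      (measurable_norm.pow_const _).aestronglyMeasurable
      ((ae_restrict_iff' measurableSet_ball.compl).2 (ae_of_all _ fun w hw => ?_))
  have hw : 1 ≤ ‖w‖ := by simpa using hw
  have hdouble : (2 * ‖w‖) ^ (-b) ≤ (1 + ‖w‖) ^ (-b) :=
    Real.rpow_le_rpow_of_nonpos (by positivity) (by linarith) (by linarith)
  rw [Real.mul_rpow zero_le_two (norm_nonneg w)] at hdouble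
  rw [Real.norm_eq_abs, abs_of_nonneg (by positivity)]
  calc ‖w‖ ^ (-b) = 2 ^ b * (2 ^ (-b) * ‖w‖ ^ (-b)) := by
        rw [← mul_assoc, ← Real.rpow_add zero_lt_two, add_neg_cancel, Real.rpow_zero, one_mul]
    _ ≤ 2 ^ b * (1 + ‖w‖) ^ (-b) := by gcongr

end HaarScaling

section JapaneseBracket

variable {d : ℕ}

theorem one_le_jb (x : EuclideanSpace ℝ (Fin d)) : 1 ≤ jb x :=
  Real.one_le_sqrt.2 (by nlinarith [norm_nonneg x])

theorem jb_pos (x : EuclideanSpace ℝ (Fin d)) : 0 < jb x :=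
  zero_lt_one.trans_le (one_le_jb x)

theorem norm_le_jb (x : EuclideanSpace ℝ (Fin d)) : ‖x‖ ≤ jb x :=
  Real.le_sqrt_of_sq_le (by linarith)

theorem jb_le_jb_add_norm_sub (x y : EuclideanSpace ℝ (Fin d)) : jb y ≤ jb x + ‖y - x‖ := by
  have hy : ‖y‖ ^ 2 ≤ (‖x‖ + ‖y - x‖) ^ 2 :=
    pow_le_pow_left₀ (norm_nonneg y) (norm_le_norm_add_norm_sub' y x) 2
  have hx : jb x ^ 2 = 1 + ‖x‖ ^ 2 := Real.sq_sqrt (by positivity)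
  have hxy := mul_le_mul_of_nonneg_right (norm_le_jb x) (norm_nonneg (y - x))
  refine Real.sqrt_le_iff.2 ⟨add_nonneg (jb_pos x).le (norm_nonneg _), ?_⟩
  nlinarith

theorem abs_jb_sub_jb_le (x y : EuclideanSpace ℝ (Fin d)) : |jb y - jb x| ≤ ‖y - x‖ := by
  have := jb_le_jb_add_norm_sub y x
  rw [norm_sub_rev] at this
  exact abs_sub_le_iff.2 ⟨by linarith [jb_le_jb_add_norm_sub x y], by linarith⟩

theorem abs_inv_jb_rpow_sub_le_one {k : ℝ} (hk : 0 ≤ k) (x y : EuclideanSpace ℝ (Fin d)) :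
    |(jb y ^ k)⁻¹ - (jb x ^ k)⁻¹| ≤ 1 := by
  have hx := inv_le_one_of_one_le₀ (Real.one_le_rpow (one_le_jb x) hk)
  have hy := inv_le_one_of_one_le₀ (Real.one_le_rpow (one_le_jb y) hk)
  have hx₀ := inv_pos.2 (Real.rpow_pos_of_pos (jb_pos x) k)
  have hy₀ := inv_pos.2 (Real.rpow_pos_of_pos (jb_pos y) k)
  exact abs_sub_le_iff.2 ⟨by linarith, by linarith⟩

theorem abs_inv_jb_rpow_sub_le_of_norm_sub_le {k : ℝ} (hk : 0 ≤ k)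
    {x y : EuclideanSpace ℝ (Fin d)} (h : ‖y - x‖ ≤ jb x / 2) :
    |(jb y ^ k)⁻¹ - (jb x ^ k)⁻¹| ≤ k * (jb x / 2) ^ (-k - 1) * ‖y - x‖ := by
  have hx := jb_pos x
  have hy : jb x / 2 ≤ jb y := by linarith [(abs_sub_le_iff.1 (abs_jb_sub_jb_le x y)).2]
  rw [← Real.rpow_neg (jb_pos y).le, ← Real.rpow_neg hx.le]
  calc _ ≤ k * (jb x / 2) ^ (-k - 1) * |jb y - jb x| :=
        abs_rpow_neg_sub_rpow_neg_le hk (by positivity) hy (by linarith)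
    _ ≤ _ := by gcongr; exact abs_jb_sub_jb_le x y

theorem lintegral_inv_jb_rpow_sub_div_le {k : ℝ} (hk : 0 ≤ k) (α : ℝ)
    (x : EuclideanSpace ℝ (Fin d)) :
    ∫⁻ y, ENNReal.ofReal (|(jb y ^ k)⁻¹ - (jb x ^ k)⁻¹| / ‖y - x‖ ^ ((d : ℝ) + α)) ≤
      ENNReal.ofReal (k * (jb x / 2) ^ (-k - α)) *
          (∫⁻ w : EuclideanSpace ℝ (Fin d) in ball 0 1,
            ENNReal.ofReal (‖w‖ ^ (1 - ((d : ℝ) + α)))) +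
        ENNReal.ofReal ((jb x / 2) ^ (-α)) *
          ∫⁻ w : EuclideanSpace ℝ (Fin d) in (ball 0 1)ᶜ,
            ENNReal.ofReal (‖w‖ ^ (-((d : ℝ) + α))) := by
  set r := jb x / 2
  have hr : 0 < r := half_pos (jb_pos x)
  set β := (d : ℝ) + α
  set F := fun y => ENNReal.ofReal (|(jb y ^ k)⁻¹ - (jb x ^ k)⁻¹| / ‖y - x‖ ^ β)
  have hnear : ∀ z ∈ ball 0 r,
      F (z + x) ≤ ENNReal.ofReal (k * r ^ (-k - 1)) * ENNReal.ofReal (‖z‖ ^ (1 - β)) := by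
    intro z hz
    rw [mem_ball_zero_iff] at hz
    rw [← ENNReal.ofReal_mul (by positivity)]
    refine ENNReal.ofReal_le_ofReal ?_
    rcases eq_or_ne z 0 with rfl | hz₀
    · simp only [zero_add, sub_self, abs_zero, zero_div]
      positivity
    have hΔ := abs_inv_jb_rpow_sub_le_of_norm_sub_le hk (x := x) (y := z + x)
      (by rw [add_sub_cancel_right]; exact hz.le)
    rw [add_sub_cancel_right] at hΔ ⊢
    calc _ ≤ k * r ^ (-k - 1) * ‖z‖ / ‖z‖ ^ β := by gcongr
      _ = _ := by rw [Real.rpow_sub (norm_pos_iff.2 hz₀), Real.rpow_one, mul_div_assoc]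
  have hfar : ∀ z ∈ (ball 0 r)ᶜ, F (z + x) ≤ ENNReal.ofReal (‖z‖ ^ (-β)) := by
    intro z hz
    have hz : r ≤ ‖z‖ := by simpa using hz
    refine ENNReal.ofReal_le_ofReal ?_
    rw [add_sub_cancel_right, Real.rpow_neg (norm_nonneg z), inv_eq_one_div (‖z‖ ^ β)]
    exact div_le_div_of_nonneg_right (abs_inv_jb_rpow_sub_le_one hk x (z + x))
      (Real.rpow_nonneg (norm_nonneg z) β)
  calc ∫⁻ y, F y = (∫⁻ z in ball 0 r, F (z + x)) + ∫⁻ z in (ball 0 r)ᶜ, F (z + x) := by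
        rw [lintegral_add_compl _ measurableSet_ball, lintegral_add_right_eq_self]
    _ ≤ (∫⁻ z in ball 0 r,
            ENNReal.ofReal (k * r ^ (-k - 1)) * ENNReal.ofReal (‖z‖ ^ (1 - β))) +
          ∫⁻ z in (ball 0 r)ᶜ, ENNReal.ofReal (‖z‖ ^ (-β)) :=
        add_le_add (setLIntegral_mono' measurableSet_ball hnear)
          (setLIntegral_mono' measurableSet_ball.compl hfar)
    _ = _ := by
        rw [lintegral_const_mul' _ _ ENNReal.ofReal_ne_top,
          setLIntegral_norm_rpow_eq_mul_preimage_smul volume hr _ (ball 0 r),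
          setLIntegral_norm_rpow_eq_mul_preimage_smul volume hr _ (ball 0 r)ᶜ, Set.preimage_compl,
          preimage_smul_ball_zero hr, finrank_euclideanSpace_fin, ← mul_assoc,
          ← ENNReal.ofReal_mul (by positivity), mul_assoc, ← Real.rpow_add hr]
        congr 4
        · congr 1; ring
        · ring

end JapaneseBracket

theorem stmt3 (d : ℕ) (hd : 0 < d) (α k : ℝ) (hα : 0 < α ∧ α < 1) (hk : 0 < k ∧ k < α) :
    ∃ C : ℝ, 0 < C ∧ ∀ x : EuclideanSpace ℝ (Fin d),
      ∫⁻ y : EuclideanSpace ℝ (Fin d),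
          ENNReal.ofReal (|(jb y ^ k)⁻¹ - (jb x ^ k)⁻¹| / ‖y - x‖ ^ ((d : ℝ) + α)) ≤
        ENNReal.ofReal (C * jb x ^ (-α)) := by
  obtain ⟨hα₀, hα₁⟩ := hα
  obtain ⟨hk₀, -⟩ := hk
  have hdim : finrank ℝ (EuclideanSpace ℝ (Fin d)) = d := finrank_euclideanSpace_fin
  obtain ⟨c₁, hI₁⟩ : ∃ c : ℝ≥0, (c : ℝ≥0∞) = _ := ⟨_, ENNReal.coe_toNNReal <|
    (lintegral_ball_norm_rpow_lt_top volume (by rw [hdim]; exact hd)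
      (a := 1 - ((d : ℝ) + α)) (by rw [hdim]; linarith) 1).ne⟩
  obtain ⟨c₂, hI₂⟩ : ∃ c : ℝ≥0, (c : ℝ≥0∞) = _ := ⟨_, ENNReal.coe_toNNReal <|
    (lintegral_compl_ball_norm_rpow_lt_top volume (b := (d : ℝ) + α)
      (by rw [hdim]; linarith)).ne⟩
  refine ⟨k * 2 ^ (k + α) * c₁ + 2 ^ α * c₂ + 1, by positivity, fun x => ?_⟩
  refine (lintegral_inv_jb_rpow_sub_div_le hk₀.le α x).trans ?_
  have hx := one_le_jb x
  have hx₀ := jb_pos x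
  have hdecay : jb x ^ (-(k + α)) ≤ jb x ^ (-α) :=
    Real.rpow_le_rpow_of_exponent_le hx (by linarith)
  rw [← hI₁, ← hI₂, ← ENNReal.ofReal_coe_nnreal, ← ENNReal.ofReal_coe_nnreal,
    ← ENNReal.ofReal_mul (by positivity), ← ENNReal.ofReal_mul (by positivity),
    ← ENNReal.ofReal_add (by positivity) (by positivity), show -k - α = -(k + α) by ring,
    div_two_rpow_neg (by positivity), div_two_rpow_neg (by positivity)]
  refine ENNReal.ofReal_le_ofReal ?_
  have := mul_le_mul_of_nonneg_left hdecay (by positivity : 0 ≤ k * 2 ^ (k + α) * (c₁ : ℝ))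
  nlinarith [Real.rpow_nonneg hx₀.le (-α)]
end

section
/- Let d ∈ ℕ*, α ∈ (0,2), p ∈ (1,∞), Ω ⊂ ℝ^d a bounded measurable set, and μ : ℝ^d → [0,∞) with μ ∈ L^∞(Ω) and μ(Ω) := ∫_Ω μ > 0. Then for every measurable u : ℝ^d → ℝ with ∫_Ω |u|^p μ < ∞: 0 ≤ ∫_Ω u(x)^{p−1} ( u(x) − ⟨u⟩_{μ,Ω} ) μ(x) dx ≤ diam(Ω)^{d+α} ( ‖μ‖_{L^∞(Ω)} / μ(Ω) ) ∫_Ω D_p(u)(x) μ(x) dx, where ⟨u⟩_{μ,Ω} := (1/μ(Ω)) ∫_Ω u μ, u^{p−1} is the signed power, diam(Ω) := sup_{(x,y)∈Ω²} |x−y|, and D_p(u)(x) := (1/2)∫_{ℝ^d} (u(y)−u(x))(u(y)^{p−1}−u(x)^{p−1}) / |y−x|^{d+α} dy. -/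
open MeasureTheory

/-!
Let `f = sgnPow (p - 1)`, an odd nondecreasing function, so that
`(u y - u x) * (f (u y) - f (u x)) ≥ 0`. Expanding this product shows that its double integral
against `μ(x) μ(y)` over `Ω × Ω` equals `2 μ(Ω) ∫_Ω f(u) (u - ⟨u⟩) μ`, which gives nonnegativity.
For the upper bound, `|y - x| ≤ diam Ω` on `Ω × Ω` bounds the integrand by `diam(Ω)^(d+α)` times
the fractional kernel, `μ(y) ≤ ‖μ‖_∞`, and enlarging the inner domain from `Ω` to `ℝ^d` yields
`2 ∫_Ω D_p(u) μ`.
-/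

/-- Signed power: `z ^ a := |z| ^ (a-1) * z`, with `0 ^ a = 0`. -/
noncomputable def sgnPow (a z : ℝ) : ℝ := |z| ^ (a - 1) * z

section SignedPower

variable {a : ℝ}

lemma sgnPow_nonneg {z : ℝ} (hz : 0 ≤ z) : 0 ≤ sgnPow a z :=
  mul_nonneg (Real.rpow_nonneg (abs_nonneg z) _) hz

lemma sgnPow_of_pos {z : ℝ} (hz : 0 < z) : sgnPow a z = z ^ a := by
  rw [sgnPow, abs_of_pos hz, ← Real.rpow_add_one hz.ne', sub_add_cancel]

lemma sgnPow_neg (z : ℝ) : sgnPow a (-z) = -sgnPow a z := by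
  simp [sgnPow]

lemma measurable_sgnPow (a : ℝ) : Measurable (sgnPow a) :=
  (measurable_id.abs.pow_const _).mul measurable_id

lemma monotoneOn_sgnPow_Ici (ha : 0 < a) : MonotoneOn (sgnPow a) (Set.Ici 0) := by
  intro x hx y _ hxy
  rcases (Set.mem_Ici.1 hx).eq_or_lt with rfl | hx
  · simpa [sgnPow] using sgnPow_nonneg (a := a) (hx.trans hxy)
  · rw [sgnPow_of_pos hx, sgnPow_of_pos (hx.trans_le hxy)]
    exact Real.rpow_le_rpow hx.le hxy ha.le

lemma monotone_sgnPow (ha : 0 < a) : Monotone (sgnPow a) := by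
  have hodd : ∀ z, sgnPow a z = -sgnPow a (-z) := fun z => by rw [sgnPow_neg, neg_neg]
  refine MonotoneOn.Iic_union_Ici (fun x hx y hy hxy => ?_) (monotoneOn_sgnPow_Ici ha)
  rw [hodd x, hodd y, neg_le_neg_iff]
  exact monotoneOn_sgnPow_Ici ha (neg_nonneg.2 (Set.mem_Iic.1 hy)) (neg_nonneg.2 (Set.mem_Iic.1 hx))
    (neg_le_neg hxy)

lemma sgnPow_mul_self (ha : 0 < a) (z : ℝ) : z * sgnPow a z = |z| ^ (a + 1) := by
  rcases eq_or_ne z 0 with rfl | hz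
  · simp [sgnPow, Real.zero_rpow (by linarith : a + 1 ≠ 0)]
  · have hz' := (abs_pos.2 hz).ne'
    rw [sgnPow, mul_left_comm, ← abs_mul_abs_self, ← mul_assoc, ← Real.rpow_add_one hz',
      sub_add_cancel, ← Real.rpow_add_one hz']

lemma abs_sgnPow (ha : 0 < a) (z : ℝ) : |sgnPow a z| = |z| ^ a := by
  rcases eq_or_ne z 0 with rfl | hz
  · simp [sgnPow, Real.zero_rpow ha.ne']
  · rw [sgnPow, abs_mul, abs_of_nonneg (Real.rpow_nonneg (abs_nonneg z) _),
      ← Real.rpow_add_one (abs_pos.2 hz).ne', sub_add_cancel]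

lemma sub_mul_sgnPow_sub_nonneg (ha : 0 < a) (x y : ℝ) :
    0 ≤ (y - x) * (sgnPow a y - sgnPow a x) := by
  rcases le_total x y with h | h
  · exact mul_nonneg (sub_nonneg.2 h) (sub_nonneg.2 (monotone_sgnPow ha h))
  · exact mul_nonneg_of_nonpos_of_nonpos (sub_nonpos.2 h) (sub_nonpos.2 (monotone_sgnPow ha h))

end SignedPower

lemma Real.rpow_le_one_add_rpow {t q r : ℝ} (ht : 0 ≤ t) (hq : 0 ≤ q) (hqr : q ≤ r) :
    t ^ q ≤ 1 + t ^ r := by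
  rcases le_or_gt t 1 with h1 | h1
  · exact (Real.rpow_le_one ht h1 hq).trans (le_add_of_nonneg_right (Real.rpow_nonneg ht _))
  · exact (Real.rpow_le_rpow_of_exponent_le h1.le hqr).trans (le_add_of_nonneg_left zero_le_one)

-- The coefficients, `1` included, are spelled out so that `integral_moment_combination` applies.
lemma sub_mul_sub_mul_eq_moment_combination {X : Type*} (u v w : X → ℝ) (x : X) :
    (fun y => (u y - u x) * (v y - v x) * w y) = fun y =>
      u x * v x * w y - v x * (u y * w y) - u x * (v y * w y) + 1 * (u y * v y * w y) := by
  ext y; ring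

section WeightedMoments

variable {X : Type*} [MeasurableSpace X] {ν : Measure X} {u v w : X → ℝ}

lemma integrable_mul_of_abs_le_rpow {g : X → ℝ} {p q : ℝ} (hw : Integrable w ν)
    (hw0 : ∀ x, 0 ≤ w x) (hupw : Integrable (fun x => |u x| ^ p * w x) ν)
    (hg : AEStronglyMeasurable g ν) (hq : 0 ≤ q) (hqp : q ≤ p) (hgu : ∀ x, |g x| ≤ |u x| ^ q) :
    Integrable (fun x => g x * w x) ν := by
  refine (hw.add hupw).mono' (hg.mul hw.1) (Filter.Eventually.of_forall fun x => ?_)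
  rw [Real.norm_eq_abs, abs_mul, abs_of_nonneg (hw0 x), Pi.add_apply, ← one_add_mul]
  exact mul_le_mul_of_nonneg_right
    ((hgu x).trans (Real.rpow_le_one_add_rpow (abs_nonneg _) hq hqp)) (hw0 x)

lemma integrable_moment_combination (hw : Integrable w ν) (huw : Integrable (fun x => u x * w x) ν)
    (hvw : Integrable (fun x => v x * w x) ν) (huvw : Integrable (fun x => u x * v x * w x) ν)
    (a b c e : ℝ) :
    Integrable (fun x => a * w x - b * (u x * w x) - c * (v x * w x) + e * (u x * v x * w x)) ν :=
  (((hw.const_mul a).sub (huw.const_mul b)).sub (hvw.const_mul c)).add (huvw.const_mul e)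

lemma integral_moment_combination (hw : Integrable w ν) (huw : Integrable (fun x => u x * w x) ν)
    (hvw : Integrable (fun x => v x * w x) ν) (huvw : Integrable (fun x => u x * v x * w x) ν)
    (a b c e : ℝ) :
    ∫ x, a * w x - b * (u x * w x) - c * (v x * w x) + e * (u x * v x * w x) ∂ν =
      a * ∫ x, w x ∂ν - b * ∫ x, u x * w x ∂ν - c * ∫ x, v x * w x ∂ν +
        e * ∫ x, u x * v x * w x ∂ν := by
  have hab := (hw.const_mul a).sub' (huw.const_mul b)
  rw [integral_add (hab.sub' (hvw.const_mul c)) (huvw.const_mul e),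
    integral_sub hab (hvw.const_mul c), integral_sub (hw.const_mul a) (huw.const_mul b),
    integral_const_mul, integral_const_mul, integral_const_mul, integral_const_mul]

lemma integrable_sub_mul_sub_mul (hw : Integrable w ν) (huw : Integrable (fun x => u x * w x) ν)
    (hvw : Integrable (fun x => v x * w x) ν) (huvw : Integrable (fun x => u x * v x * w x) ν)
    (x : X) : Integrable (fun y => (u y - u x) * (v y - v x) * w y) ν := by
  rw [sub_mul_sub_mul_eq_moment_combination]
  exact integrable_moment_combination hw huw hvw huvw _ _ _ _

lemma integral_sub_mul_sub_mul_mul_eq_moment_combination (hw : Integrable w ν)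
    (huw : Integrable (fun x => u x * w x) ν) (hvw : Integrable (fun x => v x * w x) ν)
    (huvw : Integrable (fun x => u x * v x * w x) ν) :
    (fun x => (∫ y, (u y - u x) * (v y - v x) * w y ∂ν) * w x) = fun x =>
      (∫ y, u y * v y * w y ∂ν) * w x - (∫ y, v y * w y ∂ν) * (u x * w x) -
        (∫ y, u y * w y ∂ν) * (v x * w x) + (∫ y, w y ∂ν) * (u x * v x * w x) := by
  ext x
  rw [sub_mul_sub_mul_eq_moment_combination, integral_moment_combination hw huw hvw huvw]
  ring

lemma integrable_integral_sub_mul_sub_mul_mul (hw : Integrable w ν)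
    (huw : Integrable (fun x => u x * w x) ν) (hvw : Integrable (fun x => v x * w x) ν)
    (huvw : Integrable (fun x => u x * v x * w x) ν) :
    Integrable (fun x => (∫ y, (u y - u x) * (v y - v x) * w y ∂ν) * w x) ν := by
  rw [integral_sub_mul_sub_mul_mul_eq_moment_combination hw huw hvw huvw]
  exact integrable_moment_combination hw huw hvw huvw _ _ _ _

lemma integral_mul_sub_average_eq_integral_integral_div (hw : Integrable w ν)
    (huw : Integrable (fun x => u x * w x) ν) (hvw : Integrable (fun x => v x * w x) ν)
    (huvw : Integrable (fun x => u x * v x * w x) ν) (hw0 : ∫ x, w x ∂ν ≠ 0) :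
    ∫ x, v x * (u x - (∫ y, u y * w y ∂ν) / ∫ y, w y ∂ν) * w x ∂ν =
      (∫ x, (∫ y, (u y - u x) * (v y - v x) * w y ∂ν) * w x ∂ν) / (2 * ∫ y, w y ∂ν) := by
  have hexp : (fun x => v x * (u x - (∫ y, u y * w y ∂ν) / ∫ y, w y ∂ν) * w x) = fun x =>
      0 * w x - 0 * (u x * w x) - (∫ y, u y * w y ∂ν) / (∫ y, w y ∂ν) * (v x * w x) +
        1 * (u x * v x * w x) := by
    ext x; ring
  rw [hexp, integral_moment_combination hw huw hvw huvw,
    integral_sub_mul_sub_mul_mul_eq_moment_combination hw huw hvw huvw,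
    integral_moment_combination hw huw hvw huvw]
  field_simp
  ring

end WeightedMoments

section DoubleIntegral

variable {X : Type*} [MeasurableSpace X] {ν : Measure X} {g : X → X → ℝ} {w : X → ℝ}

lemma integral_integral_mul_mul_nonneg (hg : ∀ x y, 0 ≤ g x y) (hw : ∀ x, 0 ≤ w x) :
    0 ≤ ∫ x, (∫ y, g x y * w y ∂ν) * w x ∂ν :=
  integral_nonneg fun x => mul_nonneg (integral_nonneg fun y => mul_nonneg (hg x y) (hw y)) (hw x)

lemma ofReal_integral_integral_mul_mul_eq_lintegral (hg : ∀ x y, 0 ≤ g x y)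
    (hw : ∀ x, 0 ≤ w x) (hinner : ∀ x, Integrable (fun y => g x y * w y) ν)
    (houter : Integrable (fun x => (∫ y, g x y * w y ∂ν) * w x) ν) :
    ENNReal.ofReal (∫ x, (∫ y, g x y * w y ∂ν) * w x ∂ν) =
      ∫⁻ x, (∫⁻ y, ENNReal.ofReal (g x y) * ENNReal.ofReal (w y) ∂ν) *
        ENNReal.ofReal (w x) ∂ν := by
  have hinner0 : ∀ x, 0 ≤ ∫ y, g x y * w y ∂ν :=
    fun x => integral_nonneg fun y => mul_nonneg (hg x y) (hw y)
  rw [ofReal_integral_eq_lintegral_ofReal houter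
    (Filter.Eventually.of_forall fun x => mul_nonneg (hinner0 x) (hw x))]
  refine lintegral_congr fun x => ?_
  rw [ENNReal.ofReal_mul (hinner0 x), ofReal_integral_eq_lintegral_ofReal (hinner x)
    (Filter.Eventually.of_forall fun y => mul_nonneg (hg x y) (hw y))]
  simp only [ENNReal.ofReal_mul (hg x _)]

end DoubleIntegral

lemma le_rpow_mul_div_rpow {a t D s : ℝ} (ha : 0 ≤ a) (ht : 0 < t) (htD : t ≤ D) (hs : 0 ≤ s) :
    a ≤ D ^ s * (a / t ^ s) :=
  calc a = t ^ s * (a / t ^ s) := (mul_div_cancel₀ a (Real.rpow_pos_of_pos ht s).ne').symm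
    _ ≤ D ^ s * (a / t ^ s) := by gcongr

lemma lintegral_lintegral_le_diam_rpow_mul {E : Type*} [NormedAddCommGroup E] [MeasurableSpace E]
    {ν : Measure E} {Ω : Set E} (hΩ : MeasurableSet Ω) (hΩb : Bornology.IsBounded Ω)
    {s : ℝ} (hs : 0 ≤ s) {g : E → E → ℝ} (hg : ∀ x y, 0 ≤ g x y) (hgdiag : ∀ x, g x x = 0)
    {w : E → ℝ} {N : ENNReal} (hN : N ≠ ⊤) (hwN : ∀ᵐ y ∂ν.restrict Ω, ENNReal.ofReal (w y) ≤ N) :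
    ∫⁻ x in Ω, (∫⁻ y in Ω, ENNReal.ofReal (g x y) * ENNReal.ofReal (w y) ∂ν) *
        ENNReal.ofReal (w x) ∂ν ≤
      ENNReal.ofReal (Metric.diam Ω ^ s) * N *
        ∫⁻ x in Ω, (∫⁻ y, ENNReal.ofReal (g x y / ‖y - x‖ ^ s) ∂ν) * ENNReal.ofReal (w x) ∂ν := by
  set C := ENNReal.ofReal (Metric.diam Ω ^ s) * N
  have hC : C ≠ ⊤ := ENNReal.mul_ne_top ENNReal.ofReal_ne_top hN
  have hpt : ∀ x ∈ Ω, ∀ y ∈ Ω, ENNReal.ofReal (g x y) ≤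
      ENNReal.ofReal (Metric.diam Ω ^ s) * ENNReal.ofReal (g x y / ‖y - x‖ ^ s) := by
    intro x hx y hy
    rcases eq_or_ne y x with rfl | hne
    · simp [hgdiag]
    rw [← ENNReal.ofReal_mul (Real.rpow_nonneg Metric.diam_nonneg _)]
    refine ENNReal.ofReal_le_ofReal (le_rpow_mul_div_rpow (hg x y) (norm_sub_pos_iff.2 hne) ?_ hs)
    rw [← dist_eq_norm]
    exact Metric.dist_le_diam_of_mem hΩb hy hx
  have hinner : ∀ x ∈ Ω, ∫⁻ y in Ω, ENNReal.ofReal (g x y) * ENNReal.ofReal (w y) ∂ν ≤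
      C * ∫⁻ y, ENNReal.ofReal (g x y / ‖y - x‖ ^ s) ∂ν := by
    intro x hx
    rw [← lintegral_const_mul' _ _ hC]
    refine (lintegral_mono_ae ?_).trans (setLIntegral_le_lintegral Ω _)
    filter_upwards [hwN, ae_restrict_mem hΩ] with y hyN hy
    calc ENNReal.ofReal (g x y) * ENNReal.ofReal (w y)
        ≤ ENNReal.ofReal (Metric.diam Ω ^ s) * ENNReal.ofReal (g x y / ‖y - x‖ ^ s) * N :=
          mul_le_mul' (hpt x hx y hy) hyN
      _ = C * ENNReal.ofReal (g x y / ‖y - x‖ ^ s) := by ring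
  rw [← lintegral_const_mul' _ _ hC]
  refine lintegral_mono_ae ?_
  filter_upwards [ae_restrict_mem hΩ] with x hx
  rw [← mul_assoc]
  exact mul_le_mul_left (hinner x hx) _

lemma ofReal_div_two_mul_le_of_le {S M D : ℝ} {N I : ENNReal} (hS : 0 ≤ S) (hM : 0 < M)
    (hD : 0 ≤ D) (hN : N ≠ ⊤) (h : ENNReal.ofReal S ≤ ENNReal.ofReal D * N * I) :
    ENNReal.ofReal (S / (2 * M)) ≤ ENNReal.ofReal (D * (N.toReal / M)) * (1 / 2 * I) := by
  have hscale : ENNReal.ofReal (D * (N.toReal / M)) * ENNReal.ofReal (2 * M) =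
      2 * (ENNReal.ofReal D * N) := by
    rw [← ENNReal.ofReal_mul (by positivity),
      show D * (N.toReal / M) * (2 * M) = 2 * (D * N.toReal) by field_simp,
      ENNReal.ofReal_mul zero_le_two, ENNReal.ofReal_mul hD, ENNReal.ofReal_toReal hN,
      ENNReal.ofReal_ofNat]
  rw [← ENNReal.mul_le_mul_iff_left (ENNReal.ofReal_pos.2 (by positivity : 0 < 2 * M)).ne'
    ENNReal.ofReal_ne_top, ← ENNReal.ofReal_mul (by positivity),
    div_mul_cancel₀ _ (by positivity), mul_right_comm, hscale, one_div,
    mul_mul_mul_comm, ENNReal.mul_inv_cancel two_ne_zero ENNReal.ofNat_ne_top, one_mul]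
  exact h

theorem stmt15_general (d : ℕ) (α p : ℝ) (hα : 0 < α ∧ α < 2) (hp : 1 < p)
    (Ω : Set (EuclideanSpace ℝ (Fin d))) (hΩmeas : MeasurableSet Ω)
    (hΩbdd : Bornology.IsBounded Ω)
    (μ : EuclideanSpace ℝ (Fin d) → ℝ) (hμ0 : ∀ x, 0 ≤ μ x)
    (hμbdd : MemLp μ ⊤ (volume.restrict Ω)) (hμΩ : 0 < ∫ x in Ω, μ x)
    (u : EuclideanSpace ℝ (Fin d) → ℝ) (hu : Measurable u)
    (hup : Integrable (fun x => |u x| ^ p * μ x) (volume.restrict Ω)) :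
    0 ≤ ∫ x in Ω,
        sgnPow (p - 1) (u x) * (u x - (∫ y in Ω, u y * μ y) / ∫ y in Ω, μ y) * μ x ∧
    ENNReal.ofReal (∫ x in Ω,
        sgnPow (p - 1) (u x) * (u x - (∫ y in Ω, u y * μ y) / ∫ y in Ω, μ y) * μ x) ≤
      ENNReal.ofReal (Metric.diam Ω ^ ((d : ℝ) + α) *
          ((eLpNorm μ ⊤ (volume.restrict Ω)).toReal / ∫ y in Ω, μ y)) *
        ∫⁻ x in Ω,
          (1 / 2) * (∫⁻ y : EuclideanSpace ℝ (Fin d),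
            ENNReal.ofReal ((u y - u x) * (sgnPow (p - 1) (u y) - sgnPow (p - 1) (u x)) /
              ‖y - x‖ ^ ((d : ℝ) + α))) * ENNReal.ofReal (μ x) := by
  have hp1 : 0 < p - 1 := by linarith
  have : IsFiniteMeasure (volume.restrict Ω) :=
    isFiniteMeasure_restrict.2 hΩbdd.measure_lt_top.ne
  have hμint : Integrable μ (volume.restrict Ω) := hμbdd.integrable le_top
  have huμ : Integrable (fun x => u x * μ x) (volume.restrict Ω) :=
    integrable_mul_of_abs_le_rpow hμint hμ0 hup hu.aestronglyMeasurable zero_le_one hp.le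
      fun x => (Real.rpow_one _).ge
  have hfμ : Integrable (fun x => sgnPow (p - 1) (u x) * μ x) (volume.restrict Ω) :=
    integrable_mul_of_abs_le_rpow hμint hμ0 hup
      ((measurable_sgnPow _).comp hu).aestronglyMeasurable hp1.le (by linarith)
      fun x => (abs_sgnPow hp1 _).le
  have hufμ : Integrable (fun x => u x * sgnPow (p - 1) (u x) * μ x) (volume.restrict Ω) := by
    simpa only [sgnPow_mul_self hp1, sub_add_cancel] using hup
  have hg : ∀ x y, 0 ≤ (u y - u x) * (sgnPow (p - 1) (u y) - sgnPow (p - 1) (u x)) :=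
    fun x y => sub_mul_sgnPow_sub_nonneg hp1 (u x) (u y)
  have hμN : ∀ᵐ y ∂volume.restrict Ω, ENNReal.ofReal (μ y) ≤ eLpNorm μ ⊤ (volume.restrict Ω) := by
    filter_upwards [ae_le_eLpNormEssSup (f := μ)] with y hy
    rwa [eLpNorm_exponent_top, ← Real.enorm_eq_ofReal (hμ0 y)]
  rw [integral_mul_sub_average_eq_integral_integral_div hμint huμ hfμ hufμ hμΩ.ne']
  have hS0 := integral_integral_mul_mul_nonneg (ν := volume.restrict Ω) hg hμ0
  refine ⟨div_nonneg hS0 (by positivity), ?_⟩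
  simp_rw [mul_assoc (1 / 2 : ENNReal)]
  rw [lintegral_const_mul' _ _ (by simp)]
  refine ofReal_div_two_mul_le_of_le hS0 hμΩ (by positivity) hμbdd.2.ne ?_
  rw [ofReal_integral_integral_mul_mul_eq_lintegral hg hμ0
    (integrable_sub_mul_sub_mul hμint huμ hfμ hufμ)
    (integrable_integral_sub_mul_sub_mul_mul hμint huμ hfμ hufμ)]
  exact lintegral_lintegral_le_diam_rpow_mul hΩmeas hΩbdd (add_nonneg d.cast_nonneg hα.1.le) hg
    (by simp) hμbdd.2.ne hμN

theorem stmt15 (d : ℕ) (hd : 0 < d) (α p : ℝ) (hα : 0 < α ∧ α < 2) (hp : 1 < p)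
    (Ω : Set (EuclideanSpace ℝ (Fin d))) (hΩmeas : MeasurableSet Ω)
    (hΩbdd : Bornology.IsBounded Ω)
    (μ : EuclideanSpace ℝ (Fin d) → ℝ) (hμ0 : ∀ x, 0 ≤ μ x) (hμmeas : Measurable μ)
    (hμbdd : MemLp μ ⊤ (volume.restrict Ω)) (hμΩ : 0 < ∫ x in Ω, μ x)
    (u : EuclideanSpace ℝ (Fin d) → ℝ) (hu : Measurable u)
    (hup : Integrable (fun x => |u x| ^ p * μ x) (volume.restrict Ω)) :
    0 ≤ ∫ x in Ω,
        sgnPow (p - 1) (u x) * (u x - (∫ y in Ω, u y * μ y) / ∫ y in Ω, μ y) * μ x ∧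
    ENNReal.ofReal (∫ x in Ω,
        sgnPow (p - 1) (u x) * (u x - (∫ y in Ω, u y * μ y) / ∫ y in Ω, μ y) * μ x) ≤
      ENNReal.ofReal (Metric.diam Ω ^ ((d : ℝ) + α) *
          ((eLpNorm μ ⊤ (volume.restrict Ω)).toReal / ∫ y in Ω, μ y)) *
        ∫⁻ x in Ω,
          (1 / 2) * (∫⁻ y : EuclideanSpace ℝ (Fin d),
            ENNReal.ofReal ((u y - u x) * (sgnPow (p - 1) (u y) - sgnPow (p - 1) (u x)) /
              ‖y - x‖ ^ ((d : ℝ) + α))) * ENNReal.ofReal (μ x) :=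
  stmt15_general d α p hα hp Ω hΩmeas hΩbdd μ hμ0 hμbdd hμΩ u hu hup
end
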